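/- arXiv:1208.4414 — 6 statements merged into one kernel-verified Lean document; each statement's English description precedes it below -/
import Mathlib

section
/- If X₁, X₂ are nonnegative random variables with E[X₁]=E[X₂]=1 and E[X₂|X₁]=X₁ almost surely, then the Lorenz curves satisfy L₁(u) ≥ L₂(u) for all u ∈ [0,1]. -/
open MeasureTheory ProbabilityTheory
open scoped ProbabilityTheory

/-- Cumulative distribution function of a random variable `X`. -/
noncomputable def cdfOf {Ω : Type*} [MeasureSpace Ω] (X : Ω → ℝ) (x : ℝ) : ℝ :=
  (ℙ {ω | X ω ≤ x}).toReal

/-- Generalized inverse (quantile function) of a CDF `F`: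
`F⁻¹(u) = inf {x : F x ≥ u}`. -/
noncomputable def quantile (F : ℝ → ℝ) (u : ℝ) : ℝ :=
  sInf {x : ℝ | u ≤ F x}

/-- Lorenz curve of a random variable `X`: `L(u) = ∫₀ᵘ F⁻¹(τ) dτ`. -/
noncomputable def lorenz {Ω : Type*} [MeasureSpace Ω] (X : Ω → ℝ) (u : ℝ) : ℝ :=
  ∫ τ in (0:ℝ)..u, quantile (cdfOf X) τ

/-!
For `0 < u < 1` and every real `c` one has `u * c - L(u) ≤ E[(c - X)⁺]`, with equality
at `c = F⁻¹(u)`: the quantile function pushes the uniform law on `(0, 1)` forward to the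
law of `X`, and `(F⁻¹(u) - F⁻¹)⁺` equals `F⁻¹(u) - F⁻¹` on `(0, u]` and vanishes on `(u, 1)`.
Since `x ↦ (c - x)⁺` is convex, conditional Jensen turns `E[X₂ | X₁] = X₁` into
`E[(c - X₁)⁺] ≤ E[(c - X₂)⁺]`; with `c = F₂⁻¹(u)` this gives
`u * c - L₁(u) ≤ u * c - L₂(u)`. At `u = 1` both curves equal the common mean.
-/

open Set Filter

lemma setIntegral_Ioc_const_sub {f : ℝ → ℝ} {u : ℝ} (hu : 0 ≤ u) (hf : IntegrableOn f (Ioc 0 u))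
    (c : ℝ) : ∫ τ in Ioc 0 u, (c - f τ) = u * c - ∫ τ in Ioc 0 u, f τ := by
  rw [integral_sub (integrable_const c) hf, setIntegral_const,
    Real.volume_real_Ioc_of_le hu, sub_zero, smul_eq_mul]

section Quantile

variable {ν : Measure ℝ} {τ u x : ℝ}

lemma bddBelow_setOf_le_cdf (hτ : 0 < τ) : BddBelow {x | τ ≤ cdf ν x} := by
  obtain ⟨a, ha⟩ := ((tendsto_cdf_atBot ν).eventually (gt_mem_nhds hτ)).exists_forall_of_atBot
  exact ⟨a, fun x hx => le_of_not_gt fun hxa => (ha x hxa.le).not_ge hx⟩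

lemma le_cdf_quantile_cdf (hτ : τ < 1) : τ ≤ cdf ν (quantile (cdf ν) τ) := by
  have hne : {x | τ ≤ cdf ν x}.Nonempty :=
    ((tendsto_cdf_atTop ν).eventually (eventually_ge_nhds hτ)).exists
  have hright : ∀ x ∈ Ioi (quantile (cdf ν) τ), τ ≤ cdf ν x := fun x hx => by
    obtain ⟨s, hs, hsx⟩ := exists_lt_of_csInf_lt hne hx
    exact hs.trans (monotone_cdf ν hsx.le)
  exact ge_of_tendsto (((cdf ν).right_continuous _).tendsto.mono_left
      (nhdsWithin_mono _ Ioi_subset_Ici_self))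
    (eventually_nhdsWithin_of_forall hright)

lemma quantile_cdf_le_iff (hτ : τ ∈ Ioo 0 1) : quantile (cdf ν) τ ≤ x ↔ τ ≤ cdf ν x :=
  ⟨fun h => (le_cdf_quantile_cdf hτ.2).trans (monotone_cdf ν h),
    fun h => csInf_le (bddBelow_setOf_le_cdf hτ.1) h⟩

lemma monotoneOn_quantile_cdf : MonotoneOn (quantile (cdf ν)) (Ioo 0 1) :=
  fun _ ha _ hb hab => (quantile_cdf_le_iff ha).2 (hab.trans ((quantile_cdf_le_iff hb).1 le_rfl))

lemma aemeasurable_quantile_cdf : AEMeasurable (quantile (cdf ν)) (volume.restrict (Ioo 0 1)) :=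
  aemeasurable_restrict_of_monotoneOn measurableSet_Ioo monotoneOn_quantile_cdf

variable [IsProbabilityMeasure ν]

/-- Outside `(0, 1)` the infimum defining `quantile` is a junk value, hence `Ioo 0 1`. -/
lemma map_quantile_cdf : (volume.restrict (Ioo 0 1)).map (quantile (cdf ν)) = ν := by
  refine Measure.ext_of_Iic _ _ fun x => ?_
  have hpre : quantile (cdf ν) ⁻¹' Iic x ∩ Ioo 0 1 = Iic (cdf ν x) ∩ Ioo 0 1 := by
    ext τ
    simp only [mem_inter_iff, mem_preimage, mem_Iic, and_congr_left_iff]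
    exact quantile_cdf_le_iff
  rw [Measure.map_apply_of_aemeasurable aemeasurable_quantile_cdf measurableSet_Iic,
    Measure.restrict_apply' measurableSet_Ioo, hpre, ← Measure.restrict_apply' measurableSet_Ioo,
    Measure.restrict_congr_set Ioo_ae_eq_Ioc, Measure.restrict_apply measurableSet_Iic,
    inter_comm, Ioc_inter_Iic, min_eq_right (cdf_le_one ν x), Real.volume_Ioc, sub_zero,
    ofReal_cdf]

lemma integrableOn_comp_quantile_cdf_iff {g : ℝ → ℝ} (hg : AEStronglyMeasurable g ν) :
    IntegrableOn (fun τ => g (quantile (cdf ν) τ)) (Ioo 0 1) ↔ Integrable g ν := by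
  conv_rhs => rw [← map_quantile_cdf (ν := ν)]
  exact (integrable_map_measure (map_quantile_cdf (ν := ν) |>.symm ▸ hg)
    aemeasurable_quantile_cdf).symm

lemma setIntegral_comp_quantile_cdf {g : ℝ → ℝ} (hg : AEStronglyMeasurable g ν) :
    ∫ τ in Ioo 0 1, g (quantile (cdf ν) τ) = ∫ x, g x ∂ν := by
  conv_rhs => rw [← map_quantile_cdf (ν := ν)]
  exact (integral_map aemeasurable_quantile_cdf (map_quantile_cdf (ν := ν) |>.symm ▸ hg)).symm

lemma integrableOn_quantile_cdf (hν : Integrable id ν) :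
    IntegrableOn (quantile (cdf ν)) (Ioo 0 1) :=
  (integrableOn_comp_quantile_cdf_iff aestronglyMeasurable_id).2 hν

lemma mul_sub_setIntegral_quantile_cdf_le (hν : Integrable id ν) (hu0 : 0 ≤ u) (hu1 : u ≤ 1)
    (c : ℝ) : u * c - ∫ τ in Ioc 0 u, quantile (cdf ν) τ ≤ ∫ x, max (c - x) 0 ∂ν := by
  have hsub : Ioc 0 u ≤ᵐ[volume] Ioo (0 : ℝ) 1 :=
    (Ioc_subset_Ioc_right hu1).eventuallyLE.trans Ioo_ae_eq_Ioc.symm.le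
  have hQ : IntegrableOn (fun τ => c - quantile (cdf ν) τ) (Ioo 0 1) :=
    (integrableOn_const measure_Ioo_lt_top.ne).sub (integrableOn_quantile_cdf hν)
  calc u * c - ∫ τ in Ioc 0 u, quantile (cdf ν) τ
      = ∫ τ in Ioc 0 u, (c - quantile (cdf ν) τ) :=
        (setIntegral_Ioc_const_sub hu0 ((integrableOn_quantile_cdf hν).mono_set_ae hsub) c).symm
    _ ≤ ∫ τ in Ioc 0 u, max (c - quantile (cdf ν) τ) 0 :=
        integral_mono (hQ.mono_set_ae hsub) (hQ.mono_set_ae hsub).pos_part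
          fun _ => le_max_left _ _
    _ ≤ ∫ τ in Ioo 0 1, max (c - quantile (cdf ν) τ) 0 :=
        setIntegral_mono_set hQ.pos_part (.of_forall fun _ => le_max_right _ _) hsub
    _ = ∫ x, max (c - x) 0 ∂ν :=
        setIntegral_comp_quantile_cdf
          (by fun_prop : Continuous fun x => max (c - x) 0).aestronglyMeasurable

lemma mul_sub_setIntegral_quantile_cdf_eq (hν : Integrable id ν) (hu : u ∈ Ioo 0 1) :
    u * quantile (cdf ν) u - ∫ τ in Ioc 0 u, quantile (cdf ν) τ =
      ∫ x, max (quantile (cdf ν) u - x) 0 ∂ν := by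
  set Q := quantile (cdf ν)
  have hsub : Ioc 0 u ⊆ Ioo 0 1 := Ioc_subset_Ioo_right hu.2
  calc u * Q u - ∫ τ in Ioc 0 u, Q τ
      = ∫ τ in Ioc 0 u, (Q u - Q τ) :=
        (setIntegral_Ioc_const_sub hu.1.le ((integrableOn_quantile_cdf hν).mono_set hsub) _).symm
    _ = ∫ τ in Ioc 0 u, max (Q u - Q τ) 0 :=
        setIntegral_congr_fun measurableSet_Ioc fun τ hτ =>
          (max_eq_left (sub_nonneg.2 (monotoneOn_quantile_cdf (hsub hτ) hu hτ.2))).symm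
    _ = ∫ τ in Ioo 0 1, max (Q u - Q τ) 0 :=
        (setIntegral_eq_of_subset_of_forall_sdiff_eq_zero measurableSet_Ioo hsub
          fun τ ⟨hτ, hτu⟩ => max_eq_right (sub_nonpos.2
            (monotoneOn_quantile_cdf hu hτ (le_of_not_ge fun h => hτu ⟨hτ.1, h⟩)))).symm
    _ = ∫ x, max (Q u - x) 0 ∂ν :=
        setIntegral_comp_quantile_cdf
          (by fun_prop : Continuous fun x => max (Q u - x) 0).aestronglyMeasurable

lemma setIntegral_quantile_cdf :
    ∫ τ in Ioc 0 1, quantile (cdf ν) τ = ∫ x, x ∂ν := by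
  rw [← Measure.restrict_congr_set Ioo_ae_eq_Ioc]
  exact setIntegral_comp_quantile_cdf aestronglyMeasurable_id

end Quantile

theorem ConvexOn.integral_comp_le_of_condExp_ae_eq {E Ω : Type*} [NormedAddCommGroup E]
    [NormedSpace ℝ E] [CompleteSpace E] {m m₀ : MeasurableSpace Ω} {μ : Measure Ω}
    {φ : E → ℝ} {X Y : Ω → E} (hφ : ConvexOn ℝ univ φ) (hφc : LowerSemicontinuous φ)
    (hm : m ≤ m₀) [SigmaFinite (μ.trim hm)] (hY : Integrable Y μ)
    (hφX : Integrable (φ ∘ X) μ) (hφY : Integrable (φ ∘ Y) μ) (hXY : μ[Y|m] =ᵐ[μ] X) :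
    ∫ ω, φ (X ω) ∂μ ≤ ∫ ω, φ (Y ω) ∂μ :=
  calc ∫ ω, φ (X ω) ∂μ
      ≤ ∫ ω, μ[φ ∘ Y|m] ω ∂μ := integral_mono_ae hφX integrable_condExp <| by
        filter_upwards [hXY, hφ.map_condExp_le_univ hm hφc hY hφY] with ω hω hle
        simpa [hω] using hle
    _ = ∫ ω, φ (Y ω) ∂μ := integral_condExp hm

section RandomVariable

variable {Ω : Type*} [MeasureSpace Ω] [IsProbabilityMeasure (ℙ : Measure Ω)]
  {X : Ω → ℝ} {u : ℝ}

lemma cdfOf_eq_cdf_map (hX : AEMeasurable X) : cdfOf X = cdf ((ℙ : Measure Ω).map X) := by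
  have := Measure.isProbabilityMeasure_map (μ := ℙ) hX
  funext x
  rw [cdfOf, cdf_eq_real, measureReal_def, Measure.map_apply_of_aemeasurable hX measurableSet_Iic]
  rfl

lemma lorenz_eq_setIntegral (hX : AEMeasurable X) (hu : 0 ≤ u) :
    lorenz X u = ∫ τ in Ioc 0 u, quantile (cdf ((ℙ : Measure Ω).map X)) τ := by
  rw [lorenz, cdfOf_eq_cdf_map hX, intervalIntegral.integral_of_le hu]

lemma lorenz_one_eq_integral (hX : Integrable X) : lorenz X 1 = ∫ ω, X ω := by
  have := Measure.isProbabilityMeasure_map (μ := ℙ) hX.aemeasurable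
  rw [lorenz_eq_setIntegral hX.aemeasurable zero_le_one, setIntegral_quantile_cdf]
  exact integral_map hX.aemeasurable aestronglyMeasurable_id

lemma mul_sub_lorenz_le (hX : Integrable X) (hu0 : 0 ≤ u) (hu1 : u ≤ 1) (c : ℝ) :
    u * c - lorenz X u ≤ ∫ ω, max (c - X ω) 0 := by
  have := Measure.isProbabilityMeasure_map (μ := ℙ) hX.aemeasurable
  rw [lorenz_eq_setIntegral hX.aemeasurable hu0, ← integral_map hX.aemeasurable
    (by fun_prop : Continuous fun x => max (c - x) 0).aestronglyMeasurable]
  exact mul_sub_setIntegral_quantile_cdf_le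
    ((integrable_map_measure aestronglyMeasurable_id hX.aemeasurable).2 hX) hu0 hu1 c

lemma mul_sub_lorenz_eq (hX : Integrable X) (hu : u ∈ Ioo 0 1) :
    u * quantile (cdfOf X) u - lorenz X u = ∫ ω, max (quantile (cdfOf X) u - X ω) 0 := by
  have := Measure.isProbabilityMeasure_map (μ := ℙ) hX.aemeasurable
  rw [lorenz_eq_setIntegral hX.aemeasurable hu.1.le, cdfOf_eq_cdf_map hX.aemeasurable,
    ← integral_map hX.aemeasurable (by fun_prop : Continuous fun x =>
      max (quantile (cdf ((ℙ : Measure Ω).map X)) u - x) 0).aestronglyMeasurable]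
  exact mul_sub_setIntegral_quantile_cdf_eq
    ((integrable_map_measure aestronglyMeasurable_id hX.aemeasurable).2 hX) hu

end RandomVariable

theorem lorenz_decreases_of_fair_gamble_general {Ω : Type*} [MeasureSpace Ω]
    [IsProbabilityMeasure (ℙ : Measure Ω)]
    (X₁ X₂ : Ω → ℝ) (hm₁ : Measurable X₁)
    (h₂ : Integrable X₂)
    (hmart : (ℙ : Measure Ω)[X₂ | MeasurableSpace.comap X₁ (borel ℝ)] =ᵐ[ℙ] X₁) :
    ∀ u ∈ Set.Icc (0:ℝ) 1, lorenz X₂ u ≤ lorenz X₁ u := by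
  rintro u ⟨hu0, hu1⟩
  have hm : MeasurableSpace.comap X₁ (borel ℝ) ≤ ‹MeasureSpace Ω›.toMeasurableSpace := by
    rw [← BorelSpace.measurable_eq (α := ℝ)]
    exact hm₁.comap_le
  have h₁ : Integrable X₁ := integrable_condExp.congr hmart
  obtain rfl | hu0 := hu0.eq_or_lt
  · simp [lorenz]
  obtain hu1 | rfl := hu1.lt_or_eq
  · set c := quantile (cdfOf X₂) u
    have hconvex : ConvexOn ℝ univ fun x : ℝ => max (c - x) 0 :=
      ((convexOn_const c convex_univ).sub (concaveOn_id convex_univ)).sup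
        (convexOn_const 0 convex_univ)
    have hcont : Continuous fun x : ℝ => max (c - x) 0 := by fun_prop
    have hint : ∀ X : Ω → ℝ, Integrable X → Integrable (fun ω => max (c - X ω) 0) :=
      fun X hX => ((integrable_const c).sub hX).pos_part
    have hjensen := hconvex.integral_comp_le_of_condExp_ae_eq hcont.lowerSemicontinuous hm h₂
      (hint X₁ h₁) (hint X₂ h₂) hmart
    linarith [mul_sub_lorenz_le h₁ hu0.le hu1.le c, mul_sub_lorenz_eq h₂ ⟨hu0, hu1⟩]
  · rw [lorenz_one_eq_integral h₂, lorenz_one_eq_integral h₁, ← integral_condExp hm,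
      integral_congr_ae hmart]

/-- Converse part of Theorem 1: if `X₂` arises from `X₁` by a fair gamble
(`E[X₂|X₁] = X₁` a.s.) and both are nonnegative with mean one, then the
Lorenz curves satisfy `L₁(u) ≥ L₂(u)` for all `u ∈ [0,1]`. -/
theorem lorenz_decreases_of_fair_gamble {Ω : Type*} [MeasureSpace Ω]
    [IsProbabilityMeasure (ℙ : Measure Ω)]
    (X₁ X₂ : Ω → ℝ) (hm₁ : Measurable X₁) (hm₂ : Measurable X₂)
    (h₁ : Integrable X₁) (h₂ : Integrable X₂)
    (hpos₁ : ∀ ω, 0 ≤ X₁ ω) (hpos₂ : ∀ ω, 0 ≤ X₂ ω)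
    (hmean₁ : ∫ ω, X₁ ω = 1) (hmean₂ : ∫ ω, X₂ ω = 1)
    (hmart : (ℙ : Measure Ω)[X₂ | MeasurableSpace.comap X₁ (borel ℝ)] =ᵐ[ℙ] X₁) :
    ∀ u ∈ Set.Icc (0:ℝ) 1, lorenz X₂ u ≤ lorenz X₁ u :=
  lorenz_decreases_of_fair_gamble_general X₁ X₂ hm₁ h₂ hmart
end

section
/- Let X be a discrete random variable taking finitely many values x₁ < x₂ < ... < xₙ with probabilities p₁,...,pₙ, where x₁ ≥ 0 and E[X] = c > 0. Then there exists a discrete-time martingale (M_k) with M₀ = c almost surely, each step of which is a binary fair gamble (conditionally on the past, M_{k+1} takes at most two values with conditional mean M_k), such that M_{n-1} has the same distribution as X. -/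
open MeasureTheory ProbabilityTheory
open scoped ProbabilityTheory

/-!
Put the masses `p` on `Ω = Fin n` and let `X ω = x ω`. The process reveals the outcome one
atom at a time: `M k = 𝔼[X | ω ⊓ k]`, i.e. `M k ω = x ω` when `ω < k` and otherwise the mean
`t k` of `X` on `{ω ≥ k}`. Being the conditional expectations of one variable along increasing
σ-algebras, `M` is a martingale, also for its own (smaller) natural filtration. From wealth
`t k` the next step goes either to `x k` or to `t (k + 1)`; already settled wealth `x ω`,
`ω < k`, stays put, and it can never be mistaken for `t k` because `x ω < x k ≤ t k`.
-/

section WeightedDirac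

variable {α : Type*} [Fintype α] [MeasurableSpace α] {p : α → ℝ}

noncomputable def weightedDirac (p : α → ℝ) : Measure α :=
  ∑ i, ENNReal.ofReal (p i) • Measure.dirac i

instance : IsFiniteMeasure (weightedDirac p) := by
  constructor
  simp [weightedDirac, ENNReal.sum_lt_top]

lemma isProbabilityMeasure_weightedDirac (hp : ∀ i, 0 ≤ p i) (hsum : ∑ i, p i = 1) :
    IsProbabilityMeasure (weightedDirac p) := by
  constructor
  simp [weightedDirac, ← ENNReal.ofReal_sum_of_nonneg fun i _ => hp i, hsum]

variable [MeasurableSingletonClass α]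

lemma weightedDirac_singleton (i : α) : weightedDirac p {i} = ENNReal.ofReal (p i) := by
  classical
  simp [weightedDirac, Measure.dirac_apply', Set.indicator_apply, Finset.sum_ite_eq']

lemma weightedDirac_real_singleton (hp : ∀ i, 0 ≤ p i) (i : α) :
    (weightedDirac p).real {i} = p i := by
  rw [measureReal_def, weightedDirac_singleton, ENNReal.toReal_ofReal (hp i)]

lemma setIntegral_weightedDirac (hp : ∀ i, 0 ≤ p i) (s : Finset α) (f : α → ℝ) :
    ∫ ω in s, f ω ∂weightedDirac p = ∑ i ∈ s, p i * f i := by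
  simp [setIntegral_finset s Integrable.of_finite.integrableOn, weightedDirac_real_singleton hp]

end WeightedDirac

lemma measurable_comap_top_of_factorsThrough {X Y Z : Type*} [MeasurableSpace Z]
    {f : X → Y} {g : X → Z} (h : g.FactorsThrough f) :
    Measurable[MeasurableSpace.comap f ⊤] g := by
  intro s _
  refine ⟨f '' (g ⁻¹' s), trivial, Set.ext fun a => ⟨?_, fun ha => ⟨a, ha, rfl⟩⟩⟩
  rintro ⟨b, hb, hba⟩
  rwa [Set.mem_preimage, ← h hba]

lemma condExp_ae_eq_of_ae_eq_condExp {Ω : Type*} {m m₁ m₂ m₀ : MeasurableSpace Ω}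
    {μ : Measure Ω} [IsFiniteMeasure μ] {X Y Z : Ω → ℝ}
    (hm : m ≤ m₁) (hm₁₂ : m₁ ≤ m₂) (hm₂ : m₂ ≤ m₀) (hY : StronglyMeasurable[m] Y)
    (hY₁ : Y =ᵐ[μ] μ[X | m₁]) (hZ₂ : Z =ᵐ[μ] μ[X | m₂]) : μ[Z | m] =ᵐ[μ] Y :=
  calc μ[Z | m] =ᵐ[μ] μ[μ[X | m₂] | m] := condExp_congr_ae hZ₂
    _ =ᵐ[μ] μ[X | m] := condExp_condExp_of_le (hm.trans hm₁₂) hm₂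
    _ =ᵐ[μ] μ[μ[X | m₁] | m] := (condExp_condExp_of_le hm (hm₁₂.trans hm₂)).symm
    _ =ᵐ[μ] μ[Y | m] := condExp_congr_ae hY₁.symm
    _ = Y := condExp_of_stronglyMeasurable (hm.trans (hm₁₂.trans hm₂)) hY
        (integrable_condExp.congr hY₁.symm)

section Peeling

variable {n : ℕ} (p x : Fin n → ℝ)

noncomputable def tailMean (k : ℕ) : ℝ :=
  (∑ i : Fin n with k ≤ i.val, p i * x i) / ∑ i : Fin n with k ≤ i.val, p i

noncomputable def peelingProcess (k : ℕ) (ω : Fin n) : ℝ :=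
  if (ω : ℕ) < k then x ω else tailMean p x k

abbrev sigmaMin (n k : ℕ) : MeasurableSpace (Fin n) :=
  MeasurableSpace.comap (fun ω : Fin n => min (ω : ℕ) k) ⊤

variable {p x}

lemma sum_tail_pos (hp : ∀ i, 0 < p i) {k : ℕ} (hk : k < n) :
    0 < ∑ i : Fin n with k ≤ i.val, p i :=
  Finset.sum_pos (fun i _ => hp i) ⟨⟨k, hk⟩, by simp⟩

lemma sum_tail_mul_tailMean (hp : ∀ i, 0 < p i) (k : ℕ) :
    (∑ i : Fin n with k ≤ i.val, p i) * tailMean p x k =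
      ∑ i : Fin n with k ≤ i.val, p i * x i := by
  by_cases hk : k < n
  · rw [tailMean, mul_div_cancel₀ _ (sum_tail_pos hp hk).ne']
  · have hempty : ({i | k ≤ i.val} : Finset (Fin n)) = ∅ :=
      Finset.filter_false_of_mem fun i _ => by omega
    simp [hempty]

lemma le_tailMean (hx : Monotone x) (hp : ∀ i, 0 < p i) {k : ℕ} (hk : k < n) :
    x ⟨k, hk⟩ ≤ tailMean p x k := by
  rw [tailMean, le_div_iff₀ (sum_tail_pos hp hk), Finset.mul_sum]
  refine Finset.sum_le_sum fun i hi => ?_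
  rw [mul_comm]
  exact mul_le_mul_of_nonneg_left (hx (Finset.mem_filter.1 hi).2) (hp i).le

lemma peelingProcess_zero (hsum : ∑ i, p i = 1) (ω : Fin n) :
    peelingProcess p x 0 ω = ∑ i, p i * x i := by
  simp [peelingProcess, tailMean, hsum]

lemma peelingProcess_sub_one (hp : ∀ i, 0 < p i) (ω : Fin n) :
    peelingProcess p x (n - 1) ω = x ω := by
  unfold peelingProcess
  split_ifs with hω
  · rfl
  have hlast : ({i | n - 1 ≤ i.val} : Finset (Fin n)) = {ω} := by
    ext i
    simp [Fin.ext_iff]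
    omega
  rw [tailMean, hlast, Finset.sum_singleton, Finset.sum_singleton,
    mul_div_cancel_left₀ _ (hp ω).ne']

lemma sum_tail_mul_peelingProcess (hp : ∀ i, 0 < p i) (k : ℕ) :
    ∑ i : Fin n with k ≤ i.val, p i * peelingProcess p x k i =
      ∑ i : Fin n with k ≤ i.val, p i * x i := by
  rw [← sum_tail_mul_tailMean (x := x) hp, Finset.sum_mul]
  refine Finset.sum_congr rfl fun i hi => ?_
  rw [peelingProcess, if_neg (not_lt.2 (Finset.mem_filter.1 hi).2)]

lemma comap_peelingProcess_le {j k : ℕ} (hjk : j ≤ k) :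
    MeasurableSpace.comap (peelingProcess p x j) (borel ℝ) ≤ sigmaMin n k := by
  refine (measurable_comap_top_of_factorsThrough fun ω ω' h => ?_).comap_le
  have hω : (ω : ℕ) < j → ω = ω' := fun hj => Fin.ext (by omega)
  have hω' : (ω' : ℕ) < j → ω = ω' := fun hj => Fin.ext (by omega)
  unfold peelingProcess
  split_ifs <;> simp_all

lemma sigmaMin_mono {k l : ℕ} (hkl : k ≤ l) : sigmaMin n k ≤ sigmaMin n l :=
  (measurable_comap_top_of_factorsThrough (f := fun ω : Fin n => min (ω : ℕ) l)
    fun ω ω' h => by simp only at h ⊢; omega).comap_le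

lemma setIntegral_peelingProcess (hp : ∀ i, 0 < p i) {k : ℕ} {s : Set (Fin n)}
    (hs : MeasurableSet[sigmaMin n k] s) :
    ∫ ω in s, peelingProcess p x k ω ∂weightedDirac p =
      ∫ ω in s, x ω ∂weightedDirac p := by
  classical
  obtain ⟨u, -, rfl⟩ := hs
  set s := ((fun ω : Fin n => min (ω : ℕ) k) ⁻¹' u).toFinset
  have htail : s.filter (fun i : Fin n => ¬(i : ℕ) < k) =
      if k ∈ u then ({i : Fin n | k ≤ i.val} : Finset (Fin n)) else ∅ := by
    ext i
    split_ifs <;> simp [s] <;> grind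
  rw [← Set.coe_toFinset (_ ⁻¹' u), setIntegral_weightedDirac (fun i => (hp i).le),
    setIntegral_weightedDirac (fun i => (hp i).le),
    ← s.sum_filter_add_sum_filter_not (fun i : Fin n => (i : ℕ) < k),
    ← s.sum_filter_add_sum_filter_not (fun i : Fin n => (i : ℕ) < k), htail]
  congr 1
  · refine Finset.sum_congr rfl fun i hi => ?_
    rw [peelingProcess, if_pos (Finset.mem_filter.1 hi).2]
  · split_ifs
    · exact sum_tail_mul_peelingProcess hp k
    · rfl

lemma peelingProcess_ae_eq_condExp (hp : ∀ i, 0 < p i) (k : ℕ) :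
    peelingProcess p x k =ᵐ[weightedDirac p] (weightedDirac p)[x | sigmaMin n k] :=
  ae_eq_condExp_of_forall_setIntegral_eq (fun _ _ => .of_discrete) Integrable.of_finite
    (fun _ _ _ => Integrable.of_finite.integrableOn)
    (fun _ hs _ => setIntegral_peelingProcess hp hs)
    (measurable_iff_comap_le.2 (comap_peelingProcess_le le_rfl)).aestronglyMeasurable

lemma condExp_peelingProcess_succ (hp : ∀ i, 0 < p i) (k : ℕ) :
    (weightedDirac p)[peelingProcess p x (k + 1) |
        ⨆ j ∈ Finset.range (k + 1), MeasurableSpace.comap (peelingProcess p x j) (borel ℝ)]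
      =ᵐ[weightedDirac p] peelingProcess p x k := by
  refine condExp_ae_eq_of_ae_eq_condExp
    (iSup₂_le fun j hj => comap_peelingProcess_le (Nat.lt_succ_iff.1 (Finset.mem_range.1 hj)))
    (sigmaMin_mono k.le_succ) (fun _ _ => .of_discrete) ?_
    (peelingProcess_ae_eq_condExp hp k) (peelingProcess_ae_eq_condExp hp (k + 1))
  exact (measurable_iff_comap_le.2
    (le_iSup₂_of_le k (Finset.self_mem_range_succ k) le_rfl)).stronglyMeasurable

lemma exists_binary_step (hx : StrictMono x) (hp : ∀ i, 0 < p i) (k : ℕ) :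
    ∃ f g : ℝ → ℝ, ∀ ω, peelingProcess p x (k + 1) ω = f (peelingProcess p x k ω) ∨
      peelingProcess p x (k + 1) ω = g (peelingProcess p x k ω) := by
  refine ⟨fun m => if h : k < n ∧ m = tailMean p x k then x ⟨k, h.1⟩ else m,
    fun m => if m = tailMean p x k then tailMean p x (k + 1) else m, fun ω => ?_⟩
  rcases lt_trichotomy (ω : ℕ) k with hω | rfl | hω
  · left
    dsimp only
    rw [peelingProcess, peelingProcess, if_pos hω, if_pos (hω.trans k.lt_succ_self), dif_neg]
    rintro ⟨hk, heq⟩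
    exact ((hx (show ω < ⟨k, hk⟩ from hω)).trans_le (le_tailMean hx.monotone hp hk)).ne heq
  · left
    simp [peelingProcess]
  · right
    simp [peelingProcess, hω.not_gt, show ¬(ω : ℕ) < k + 1 by omega]

end Peeling

theorem exists_binary_martingale_to_target_general (n : ℕ)
    (x p : Fin n → ℝ) (hx : StrictMono x)
    (hp : ∀ i, 0 < p i) (hsum : ∑ i, p i = 1)
    (c : ℝ) (hmean : ∑ i, p i * x i = c) :
    ∃ (Ω : Type) (_ : MeasureSpace Ω) (_ : IsProbabilityMeasure (ℙ : Measure Ω))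
      (M : ℕ → Ω → ℝ),
      (∀ k, Measurable (M k)) ∧
      (∀ ω, M 0 ω = c) ∧
      -- each step is a fair gamble:
      (∀ k, (ℙ : Measure Ω)[M (k + 1) |
          ⨆ j ∈ Finset.range (k + 1), MeasurableSpace.comap (M j) (borel ℝ)]
          =ᵐ[ℙ] M k) ∧
      -- each step is binary: given the current wealth, at most two outcomes
      (∀ k, ∃ f g : ℝ → ℝ, ∀ ω, M (k + 1) ω = f (M k ω) ∨ M (k + 1) ω = g (M k ω)) ∧
      -- the final wealth has the target distribution
      (∀ i, (ℙ {ω | M (n - 1) ω = x i}).toReal = p i) := by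
  have hprob := isProbabilityMeasure_weightedDirac (fun i => (hp i).le) hsum
  refine ⟨Fin n, ⟨weightedDirac p⟩, hprob, peelingProcess p x, fun k => .of_discrete,
    fun ω => hmean ▸ peelingProcess_zero hsum ω, condExp_peelingProcess_succ hp,
    exists_binary_step hx hp, fun i => ?_⟩
  have hfinal : {ω | peelingProcess p x (n - 1) ω = x i} = {i} := by
    ext ω
    simp [peelingProcess_sub_one hp, hx.injective.eq_iff]
  exact (congrArg _ hfinal).trans (weightedDirac_real_singleton (fun i => (hp i).le) i)

/-- Lemma 1 of the paper: any finitely supported nonnegative distribution with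
mean `c > 0` can be reached from constant wealth `c` by a finite sequence of
binary fair gambles.  Formally: there is a probability space and a process
`M` with `M 0 = c` a.s., such that each step is a martingale step
(`E[M (k+1) | σ(M 0, …, M k)] = M k` a.s.) in which, given the current wealth,
the next wealth takes at most two values, and `M (n-1)` is distributed as the
target distribution. -/
theorem exists_binary_martingale_to_target (n : ℕ) (hn : 0 < n)
    (x p : Fin n → ℝ) (hx : StrictMono x) (hx0 : 0 ≤ x ⟨0, hn⟩)
    (hp : ∀ i, 0 < p i) (hsum : ∑ i, p i = 1)
    (c : ℝ) (hc : 0 < c) (hmean : ∑ i, p i * x i = c) :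
    ∃ (Ω : Type) (_ : MeasureSpace Ω) (_ : IsProbabilityMeasure (ℙ : Measure Ω))
      (M : ℕ → Ω → ℝ),
      (∀ k, Measurable (M k)) ∧
      (∀ ω, M 0 ω = c) ∧
      -- each step is a fair gamble:
      (∀ k, (ℙ : Measure Ω)[M (k + 1) |
          ⨆ j ∈ Finset.range (k + 1), MeasurableSpace.comap (M j) (borel ℝ)]
          =ᵐ[ℙ] M k) ∧
      -- each step is binary: given the current wealth, at most two outcomes
      (∀ k, ∃ f g : ℝ → ℝ, ∀ ω, M (k + 1) ω = f (M k ω) ∨ M (k + 1) ω = g (M k ω)) ∧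
      -- the final wealth has the target distribution
      (∀ i, (ℙ {ω | M (n - 1) ω = x i}).toReal = p i) :=
  exists_binary_martingale_to_target_general n x p hx hp hsum c hmean
end

section
/- Given two Lorenz curves L_a, L_b, the greatest convex function lying below both (the lower convex envelope of min(L_a, L_b)) is a Lorenz curve, and it is the greatest element of the set of Lorenz curves L with L ≤ L_a and L ≤ L_b pointwise. -/
/-- A Lorenz curve: a continuous convex function on `[0,1]` with
`L(0)=0`, `L(1)=1` and `0 ≤ L(u) ≤ u`. -/
def IsLorenzCurve (L : ℝ → ℝ) : Prop :=
  ContinuousOn L (Set.Icc (0:ℝ) 1) ∧ ConvexOn ℝ (Set.Icc (0:ℝ) 1) L ∧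
    L 0 = 0 ∧ L 1 = 1 ∧ ∀ u ∈ Set.Icc (0:ℝ) 1, 0 ≤ L u ∧ L u ≤ u

/-- Lower convex envelope of `f` on `[0,1]`: the pointwise supremum of all
convex functions lying below `f` on `[0,1]`. -/
noncomputable def convexEnvelope (f : ℝ → ℝ) : ℝ → ℝ := fun x =>
  sSup {y : ℝ | ∃ g : ℝ → ℝ, ConvexOn ℝ (Set.Icc (0:ℝ) 1) g ∧
    (∀ u ∈ Set.Icc (0:ℝ) 1, g u ≤ f u) ∧ y = g x}

/-!
The envelope `E` of `min La Lb` is the greatest convex minorant of `min La Lb`, as soon as one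
convex minorant exists (`0` is one). Then `E` is convex with `0 ≤ E ≤ min La Lb ≤ id`, which pins
`E 0 = 0`; the convex minorant `La + Lb - id` gives `E 1 = 1`. A convex function is continuous in
the interior of `[0,1]`; at the endpoints `E` is squeezed, by `0 ≤ E ≤ id` at `0` and by
`La + Lb - id ≤ E ≤ id` at `1`.
-/

open Set

theorem continuousWithinAt_of_squeeze {α β : Type*} [TopologicalSpace α] [TopologicalSpace β]
    [LinearOrder β] [OrderTopology β] {l h u : α → β} {s : Set α} {x : α}
    (hl : ContinuousWithinAt l s x) (hu : ContinuousWithinAt u s x)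
    (hlx : l x = h x) (hux : u x = h x)
    (hlh : ∀ y ∈ s, l y ≤ h y) (hhu : ∀ y ∈ s, h y ≤ u y) :
    ContinuousWithinAt h s x := by
  have hl' : Filter.Tendsto l (nhdsWithin x s) (nhds (h x)) := hlx ▸ hl
  have hu' : Filter.Tendsto u (nhdsWithin x s) (nhds (h x)) := hux ▸ hu
  exact tendsto_of_tendsto_of_tendsto_of_le_of_le' hl' hu'
    (eventually_nhdsWithin_of_forall hlh) (eventually_nhdsWithin_of_forall hhu)

def IsConvexMinorant (f g : ℝ → ℝ) : Prop :=
  ConvexOn ℝ (Icc (0:ℝ) 1) g ∧ ∀ u ∈ Icc (0:ℝ) 1, g u ≤ f u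

namespace IsConvexMinorant

variable {f g : ℝ → ℝ}

theorem le_convexEnvelope (hg : IsConvexMinorant f g) {x : ℝ} (hx : x ∈ Icc (0:ℝ) 1) :
    g x ≤ convexEnvelope f x := by
  refine le_csSup ⟨f x, ?_⟩ ⟨g, hg.1, hg.2, rfl⟩
  rintro y ⟨g', -, hg'f, rfl⟩
  exact hg'f x hx

theorem isConvexMinorant_convexEnvelope (hg : IsConvexMinorant f g) :
    IsConvexMinorant f (convexEnvelope f) := by
  have hne : ∀ x, {y : ℝ | ∃ g : ℝ → ℝ, ConvexOn ℝ (Icc (0:ℝ) 1) g ∧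
      (∀ u ∈ Icc (0:ℝ) 1, g u ≤ f u) ∧ y = g x}.Nonempty :=
    fun x => ⟨g x, g, hg.1, hg.2, rfl⟩
  refine ⟨⟨convex_Icc 0 1, fun x hx y hy a b ha hb hab => ?_⟩, fun x hx => ?_⟩
  · refine csSup_le (hne _) ?_
    rintro z ⟨g', hg'conv, hg'f, rfl⟩
    have hg' : IsConvexMinorant f g' := ⟨hg'conv, hg'f⟩
    calc g' (a • x + b • y) ≤ a • g' x + b • g' y := hg'conv.2 hx hy ha hb hab
      _ ≤ a • convexEnvelope f x + b • convexEnvelope f y := by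
        gcongr
        exacts [hg'.le_convexEnvelope hx, hg'.le_convexEnvelope hy]
  · refine csSup_le (hne x) ?_
    rintro y ⟨g', -, hg'f, rfl⟩
    exact hg'f x hx

end IsConvexMinorant

section Lorenz

variable {La Lb : ℝ → ℝ}

theorem IsLorenzCurve.isConvexMinorant_zero_min (ha : IsLorenzCurve La) (hb : IsLorenzCurve Lb) :
    IsConvexMinorant (fun u => min (La u) (Lb u)) 0 :=
  ⟨convexOn_const 0 (convex_Icc 0 1), fun u hu => le_min (ha.2.2.2.2 u hu).1 (hb.2.2.2.2 u hu).1⟩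

theorem IsLorenzCurve.isConvexMinorant_add_sub_id_min (ha : IsLorenzCurve La)
    (hb : IsLorenzCurve Lb) :
    IsConvexMinorant (fun u => min (La u) (Lb u)) (fun u => La u + Lb u - u) := by
  refine ⟨(ha.2.1.add hb.2.1).sub (concaveOn_id (convex_Icc 0 1)), fun u hu => ?_⟩
  have := (ha.2.2.2.2 u hu).2
  have := (hb.2.2.2.2 u hu).2
  exact le_min (by linarith) (by linarith)

theorem IsLorenzCurve.convexEnvelope_min (ha : IsLorenzCurve La) (hb : IsLorenzCurve Lb) :
    IsLorenzCurve (convexEnvelope fun u => min (La u) (Lb u)) := by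
  have hzero := ha.isConvexMinorant_zero_min hb
  have hsum := ha.isConvexMinorant_add_sub_id_min hb
  obtain ⟨hEconv, hEmin⟩ := hzero.isConvexMinorant_convexEnvelope
  set E := convexEnvelope fun u => min (La u) (Lb u)
  have h0 : (0:ℝ) ∈ Icc (0:ℝ) 1 := left_mem_Icc.2 zero_le_one
  have h1 : (1:ℝ) ∈ Icc (0:ℝ) 1 := right_mem_Icc.2 zero_le_one
  have hE_nonneg : ∀ u ∈ Icc (0:ℝ) 1, 0 ≤ E u := fun u hu => hzero.le_convexEnvelope hu
  have hE_le_id : ∀ u ∈ Icc (0:ℝ) 1, E u ≤ u := fun u hu =>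
    (hEmin u hu).trans ((min_le_left _ _).trans (ha.2.2.2.2 u hu).2)
  have hE0 : E 0 = 0 :=
    le_antisymm (by simpa [ha.2.2.1, hb.2.2.1] using hEmin 0 h0) (hE_nonneg 0 h0)
  have hE1 : E 1 = 1 :=
    le_antisymm (by simpa using hE_le_id 1 h1)
      (by simpa [ha.2.2.2.1, hb.2.2.2.1] using hsum.le_convexEnvelope h1)
  refine ⟨hEconv.continuousOn_Icc zero_lt_one ((continuousWithinAt_Icc_iff_Ici zero_lt_one).1 ?_)
    ((continuousWithinAt_Icc_iff_Iic zero_lt_one).1 ?_), hEconv, hE0, hE1,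
    fun u hu => ⟨hE_nonneg u hu, hE_le_id u hu⟩⟩
  · exact continuousWithinAt_of_squeeze continuousWithinAt_const continuousWithinAt_id
      hE0.symm hE0.symm hE_nonneg hE_le_id
  · have hsum_cont : ContinuousWithinAt (fun u => La u + Lb u - u) (Icc (0:ℝ) 1) 1 :=
      ((ha.1.add hb.1).sub continuousOn_id) 1 h1
    exact continuousWithinAt_of_squeeze hsum_cont continuousWithinAt_id
      (by rw [hE1]; simp [ha.2.2.2.1, hb.2.2.2.1]) hE1.symm
      (fun u hu => hsum.le_convexEnvelope hu) hE_le_id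

end Lorenz

/-- The lower convex envelope of the pointwise minimum of two Lorenz curves is
a Lorenz curve, and it is the greatest Lorenz curve below both. -/
theorem convexEnvelope_min_isLorenz (La Lb : ℝ → ℝ)
    (ha : IsLorenzCurve La) (hb : IsLorenzCurve Lb) :
    IsLorenzCurve (convexEnvelope (fun u => min (La u) (Lb u))) ∧
    ∀ L : ℝ → ℝ, IsLorenzCurve L →
      (∀ u ∈ Set.Icc (0:ℝ) 1, L u ≤ La u) →
      (∀ u ∈ Set.Icc (0:ℝ) 1, L u ≤ Lb u) →
      ∀ u ∈ Set.Icc (0:ℝ) 1, L u ≤ convexEnvelope (fun u => min (La u) (Lb u)) u :=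
  ⟨ha.convexEnvelope_min hb, fun _ hL hLa hLb _ hu =>
    IsConvexMinorant.le_convexEnvelope ⟨hL.2.1, fun v hv => le_min (hLa v hv) (hLb v hv)⟩ hu⟩
end

section
/- The set of Lorenz curves (continuous convex functions L:[0,1]→[0,1] with L(0)=0, L(1)=1, L(u) ≤ u) partially ordered by pointwise inequality forms a lattice, with join given by pointwise maximum and meet given by the lower convex envelope of the pointwise minimum. -/
/-- Pointwise order on Lorenz curves (on `[0,1]`). -/
def LorenzLE (L₁ L₂ : ℝ → ℝ) : Prop := ∀ u ∈ Set.Icc (0:ℝ) 1, L₁ u ≤ L₂ u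

open Set

theorem continuousWithinAt_of_le_of_le {s : Set ℝ} {x : ℝ} {g h φ : ℝ → ℝ}
    (hg : ContinuousWithinAt g s x) (hh : ContinuousWithinAt h s x)
    (hgφ : ∀ u ∈ s, g u ≤ φ u) (hφh : ∀ u ∈ s, φ u ≤ h u) (hgx : g x = φ x) (hhx : h x = φ x) :
    ContinuousWithinAt φ s x := by
  rw [ContinuousWithinAt, hgx] at hg
  rw [ContinuousWithinAt, hhx] at hh
  exact tendsto_of_tendsto_of_tendsto_of_le_of_le' hg hh
    (eventually_nhdsWithin_of_forall hgφ) (eventually_nhdsWithin_of_forall hφh)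

section ConvexEnvelope

variable {f g : ℝ → ℝ}

theorem le_convexEnvelope (hg : ConvexOn ℝ (Icc 0 1) g) (hgf : LorenzLE g f) :
    LorenzLE g (convexEnvelope f) := fun x hx =>
  le_csSup ⟨f x, by rintro _ ⟨h, -, hhf, rfl⟩; exact hhf x hx⟩ ⟨g, hg, hgf, rfl⟩

theorem convexEnvelope_le (hg : ConvexOn ℝ (Icc 0 1) g) (hgf : LorenzLE g f) :
    LorenzLE (convexEnvelope f) f := fun x hx =>
  csSup_le ⟨g x, g, hg, hgf, rfl⟩ (by rintro _ ⟨h, -, hhf, rfl⟩; exact hhf x hx)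

theorem convexOn_convexEnvelope (hg : ConvexOn ℝ (Icc 0 1) g) (hgf : LorenzLE g f) :
    ConvexOn ℝ (Icc 0 1) (convexEnvelope f) := by
  refine ⟨convex_Icc 0 1, fun x hx y hy a b ha hb hab => ?_⟩
  refine csSup_le ⟨g _, g, hg, hgf, rfl⟩ ?_
  rintro _ ⟨h, hh, hhf, rfl⟩
  calc h (a • x + b • y) ≤ a • h x + b • h y := hh.2 hx hy ha hb hab
    _ ≤ a • convexEnvelope f x + b • convexEnvelope f y := by
      gcongr
      · exact le_convexEnvelope hh hhf x hx
      · exact le_convexEnvelope hh hhf y hy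

end ConvexEnvelope

section Lorenz

variable {La Lb L φ : ℝ → ℝ}

theorem IsLorenzCurve.convexOn (hL : IsLorenzCurve L) : ConvexOn ℝ (Icc 0 1) L := hL.2.1

theorem IsLorenzCurve.nonneg {u : ℝ} (hL : IsLorenzCurve L) (hu : u ∈ Icc (0:ℝ) 1) : 0 ≤ L u :=
  (hL.2.2.2.2 u hu).1

theorem IsLorenzCurve.le_self {u : ℝ} (hL : IsLorenzCurve L) (hu : u ∈ Icc (0:ℝ) 1) : L u ≤ u :=
  (hL.2.2.2.2 u hu).2

theorem IsLorenzCurve.max (ha : IsLorenzCurve La) (hb : IsLorenzCurve Lb) :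
    IsLorenzCurve (fun u => max (La u) (Lb u)) := by
  obtain ⟨haC, haV, ha0, ha1, haB⟩ := ha
  obtain ⟨hbC, hbV, hb0, hb1, hbB⟩ := hb
  refine ⟨haC.sup' hbC, haV.sup hbV, by simp [ha0, hb0], by simp [ha1, hb1], fun u hu => ?_⟩
  exact ⟨le_max_of_le_left (haB u hu).1, max_le (haB u hu).2 (hbB u hu).2⟩

theorem IsLorenzCurve.of_convexOn_of_le (hL : IsLorenzCurve L) (hφ : ConvexOn ℝ (Icc 0 1) φ)
    (hLφ : LorenzLE L φ) (hφu : ∀ u ∈ Icc (0:ℝ) 1, φ u ≤ u) : IsLorenzCurve φ := by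
  obtain ⟨hLC, -, hL0, hL1, hLB⟩ := hL
  have h0 : (0:ℝ) ∈ Icc (0:ℝ) 1 := left_mem_Icc.2 zero_le_one
  have h1 : (1:ℝ) ∈ Icc (0:ℝ) 1 := right_mem_Icc.2 zero_le_one
  have hφ0 : φ 0 = 0 := le_antisymm (hφu 0 h0) (hL0.symm.trans_le (hLφ 0 h0))
  have hφ1 : φ 1 = 1 := le_antisymm (hφu 1 h1) (hL1.symm.trans_le (hLφ 1 h1))
  have hφ0' : ContinuousWithinAt φ (Icc 0 1) 0 := continuousWithinAt_of_le_of_le (hLC 0 h0)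
    continuousWithinAt_id hLφ hφu (hL0.trans hφ0.symm) hφ0.symm
  have hφ1' : ContinuousWithinAt φ (Icc 0 1) 1 := continuousWithinAt_of_le_of_le (hLC 1 h1)
    continuousWithinAt_id hLφ hφu (hL1.trans hφ1.symm) hφ1.symm
  refine ⟨hφ.continuousOn_Icc zero_lt_one ?_ ?_, hφ, hφ0, hφ1, fun u hu =>
    ⟨(hLB u hu).1.trans (hLφ u hu), hφu u hu⟩⟩
  · exact (continuousWithinAt_Icc_iff_Ici zero_lt_one).1 hφ0'
  · exact (continuousWithinAt_Icc_iff_Iic zero_lt_one).1 hφ1'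

def lorenzMinorant (La Lb : ℝ → ℝ) : ℝ → ℝ := fun u => max 0 (La u + Lb u - u)

theorem isLorenzCurve_lorenzMinorant (ha : IsLorenzCurve La) (hb : IsLorenzCurve Lb) :
    IsLorenzCurve (lorenzMinorant La Lb) := by
  obtain ⟨haC, haV, ha0, ha1, haB⟩ := ha
  obtain ⟨hbC, hbV, hb0, hb1, hbB⟩ := hb
  refine ⟨continuousOn_const.sup' ((haC.add hbC).sub continuousOn_id),
    (convexOn_const 0 (convex_Icc 0 1)).sup ((haV.add hbV).sub (concaveOn_id (convex_Icc 0 1))),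
    by simp [lorenzMinorant, ha0, hb0], by simp [lorenzMinorant, ha1, hb1],
    fun u hu => ⟨le_max_left _ _, max_le hu.1 ?_⟩⟩
  linarith [(haB u hu).2, (hbB u hu).2]

theorem lorenzMinorant_le_min (ha : IsLorenzCurve La) (hb : IsLorenzCurve Lb) :
    LorenzLE (lorenzMinorant La Lb) (fun u => min (La u) (Lb u)) := fun u hu =>
  max_le (le_min (ha.nonneg hu) (hb.nonneg hu))
    (le_min (by linarith [hb.le_self hu]) (by linarith [ha.le_self hu]))

end Lorenz

/-- The set of Lorenz curves ordered pointwise is a lattice: the pointwise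
maximum is the least upper bound and the lower convex envelope of the
pointwise minimum is the greatest lower bound. -/
theorem lorenz_lattice (La Lb : ℝ → ℝ)
    (ha : IsLorenzCurve La) (hb : IsLorenzCurve Lb) :
    (IsLorenzCurve (fun u => max (La u) (Lb u)) ∧
      LorenzLE La (fun u => max (La u) (Lb u)) ∧
      LorenzLE Lb (fun u => max (La u) (Lb u)) ∧
      ∀ M : ℝ → ℝ, IsLorenzCurve M → LorenzLE La M → LorenzLE Lb M →
        LorenzLE (fun u => max (La u) (Lb u)) M) ∧
    (IsLorenzCurve (convexEnvelope (fun u => min (La u) (Lb u))) ∧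
      LorenzLE (convexEnvelope (fun u => min (La u) (Lb u))) La ∧
      LorenzLE (convexEnvelope (fun u => min (La u) (Lb u))) Lb ∧
      ∀ M : ℝ → ℝ, IsLorenzCurve M → LorenzLE M La → LorenzLE M Lb →
        LorenzLE M (convexEnvelope (fun u => min (La u) (Lb u)))) := by
  refine ⟨⟨ha.max hb, fun u _ => le_max_left _ _, fun u _ => le_max_right _ _,
    fun M _ hMa hMb u hu => max_le (hMa u hu) (hMb u hu)⟩, ?_⟩
  have hg := isLorenzCurve_lorenzMinorant ha hb
  have hgf := lorenzMinorant_le_min ha hb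
  have hEf := convexEnvelope_le hg.convexOn hgf
  refine ⟨hg.of_convexOn_of_le (convexOn_convexEnvelope hg.convexOn hgf)
      (le_convexEnvelope hg.convexOn hgf) fun u hu => (hEf u hu).trans
        ((min_le_left _ _).trans (ha.le_self hu)),
    fun u hu => (hEf u hu).trans (min_le_left _ _),
    fun u hu => (hEf u hu).trans (min_le_right _ _),
    fun M hM hMa hMb => le_convexEnvelope hM.convexOn fun u hu => le_min (hMa u hu) (hMb u hu)⟩
end

section
/- The function V(x) = −(1−x)·ln(1−x) on [0,1) (extended by V(1)=0) is the unique solution of the differential equation V'(x) = 1 − V(x)/(1−x) with boundary condition V(0) = 0, and satisfies 0 ≤ V(x) ≤ x for all x ∈ [0,1]. -/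
/-!
`betVolume x = negMulLog (1 - x)`, so its derivative and the bounds `0 ≤ V x ≤ x` are those of
the entropy function `-u log u` on `[0, 1]`. For uniqueness, the difference `D` of two solutions
solves the homogeneous equation `D' = -D / (1 - x)`, so `D / (1 - x)` has zero derivative on
`[0, 1)` and vanishes at `0`.
-/

/-- Minimal expected betting volume `V(x) = −(1−x)·ln(1−x)`
(with `V(1) = 0`, since `Real.log 0 = 0`). -/
noncomputable def betVolume (x : ℝ) : ℝ := -(1 - x) * Real.log (1 - x)

open Set Real

lemma betVolume_eq_negMulLog (x : ℝ) : betVolume x = negMulLog (1 - x) := rfl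

lemma betVolume_hasDerivAt {x : ℝ} (hx : x < 1) :
    HasDerivAt betVolume (1 - betVolume x / (1 - x)) x := by
  have hx' : 1 - x ≠ 0 := sub_ne_zero.2 hx.ne'
  have h : HasDerivAt betVolume ((-log (1 - x) - 1) * -1) x :=
    (hasDerivAt_negMulLog hx').comp x ((hasDerivAt_id x).const_sub 1)
  refine h.congr_deriv ?_
  rw [betVolume_eq_negMulLog, negMulLog, neg_mul, neg_div, mul_div_cancel_left₀ _ hx']
  ring

lemma hasDerivAt_div_one_sub_of_hasDerivAt {D : ℝ → ℝ} {x : ℝ} (hx : x ≠ 1)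
    (hD : HasDerivAt D (-(D x / (1 - x))) x) : HasDerivAt (fun t => D t / (1 - t)) 0 x := by
  have hx' : 1 - x ≠ 0 := sub_ne_zero.2 hx.symm
  refine (hD.div ((hasDerivAt_id x).const_sub 1) hx').congr_deriv ?_
  simp only [id]
  field_simp
  ring

lemma eqOn_Ico_of_hasDerivAt_one_sub_div {f g : ℝ → ℝ} {a : ℝ}
    (hf : ∀ x ∈ Ico a 1, HasDerivAt f (1 - f x / (1 - x)) x)
    (hg : ∀ x ∈ Ico a 1, HasDerivAt g (1 - g x / (1 - x)) x) (ha : f a = g a) :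
    EqOn f g (Ico a 1) := by
  set q : ℝ → ℝ := fun t => (f t - g t) / (1 - t)
  have hq : ∀ x ∈ Ico a 1, HasDerivAt q 0 x := fun x hx =>
    hasDerivAt_div_one_sub_of_hasDerivAt hx.2.ne <| by
      refine ((hf x hx).sub (hg x hx)).congr_deriv ?_; ring
  intro x hx
  have hsub : Icc a x ⊆ Ico a 1 := Icc_subset_Ico_right hx.2
  have hconst := constant_of_has_deriv_right_zero
    (fun t ht => (hq t (hsub ht)).continuousAt.continuousWithinAt)
    (fun t ht => (hq t (hsub (Ico_subset_Icc_self ht))).hasDerivWithinAt) x (right_mem_Icc.2 hx.1)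
  have hqx : (f x - g x) / (1 - x) = 0 := by simpa [q, ha] using hconst
  rw [div_eq_zero_iff, sub_eq_zero, sub_eq_zero] at hqx
  exact hqx.resolve_right hx.2.ne'

lemma betVolume_nonneg {x : ℝ} (h₀ : 0 ≤ x) (h₁ : x ≤ 1) : 0 ≤ betVolume x :=
  negMulLog_nonneg (sub_nonneg.2 h₁) (sub_le_self 1 h₀)

lemma betVolume_le_self {x : ℝ} (hx : x ≤ 1) : betVolume x ≤ x := by
  simpa [betVolume_eq_negMulLog] using negMulLog_le_one_sub_self (sub_nonneg.2 hx)

/-- `V(x) = −(1−x)ln(1−x)` is the unique solution on `[0,1)` of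
`V' = 1 − V/(1−x)` with `V(0) = 0`, and satisfies `0 ≤ V(x) ≤ x` on `[0,1]`. -/
theorem betVolume_ode_unique_and_bounds :
    (∀ x ∈ Set.Ico (0:ℝ) 1,
      HasDerivAt betVolume (1 - betVolume x / (1 - x)) x) ∧
    betVolume 0 = 0 ∧ betVolume 1 = 0 ∧
    (∀ W : ℝ → ℝ,
      (∀ x ∈ Set.Ico (0:ℝ) 1, HasDerivAt W (1 - W x / (1 - x)) x) →
      W 0 = 0 → ∀ x ∈ Set.Ico (0:ℝ) 1, W x = betVolume x) ∧
    (∀ x ∈ Set.Icc (0:ℝ) 1, 0 ≤ betVolume x ∧ betVolume x ≤ x) := by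
  have hV : ∀ x ∈ Ico (0 : ℝ) 1, HasDerivAt betVolume (1 - betVolume x / (1 - x)) x :=
    fun x hx => betVolume_hasDerivAt hx.2
  refine ⟨hV, by simp [betVolume_eq_negMulLog], by simp [betVolume_eq_negMulLog], ?_, ?_⟩
  · intro W hW hW0
    exact eqOn_Ico_of_hasDerivAt_one_sub_div hW hV (by simp [hW0, betVolume_eq_negMulLog])
  · exact fun x hx => ⟨betVolume_nonneg hx.1 hx.2, betVolume_le_self hx.2⟩
end

section
/- The function V*(x) = −(1−x)ln(1−x) satisfies the Bellman-type inequality V*(a + (b−a)θ) ≤ (b−a)θ + (1−θ)V*(a) + θV*(b) for all 0 ≤ a ≤ b ≤ 1 and 0 ≤ θ ≤ 1. -/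
/-!
Write `V*(x) = negMulLog (1 - x)` and put `u = 1 - a`, `v = 1 - b`, `w = (1 - θ) u + θ v`, so that
`v ≤ w ≤ u`. The defect `negMulLog w - (1 - θ) negMulLog u - θ negMulLog v` splits as
`(1 - θ) u (log u - log w) + θ v (log v - log w)`. The second term is `≤ 0` since `v ≤ w`, and
`log u - log w ≤ u / w - 1` together with `(1 - θ) u ≤ w` bounds the first by `u - w = θ (u - v)`,
which is exactly the betting volume `(b - a) θ`.
-/

/-- `V*(x) = −(1−x)ln(1−x)` (with `V*(1) = 0`, since `Real.log 0 = 0`). -/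
noncomputable def Vstar (x : ℝ) : ℝ := -(1 - x) * Real.log (1 - x)

open Real

lemma Vstar_eq_negMulLog (x : ℝ) : Vstar x = negMulLog (1 - x) := rfl

lemma mul_log_sub_log_le_sub {p x y : ℝ} (hp : 0 ≤ p) (hpy : p ≤ y) (hyx : y ≤ x) :
    p * (log x - log y) ≤ x - y := by
  rcases hp.eq_or_lt with rfl | hp
  · simpa using hyx
  have hy : 0 < y := hp.trans_le hpy
  have hlog : log x - log y ≤ x / y - 1 := by
    rw [← log_div (hy.trans_le hyx).ne' hy.ne']
    exact log_le_sub_one_of_pos (div_pos (hy.trans_le hyx) hy)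
  have hratio : 0 ≤ x / y - 1 := by rw [sub_nonneg, one_le_div hy]; exact hyx
  calc p * (log x - log y) ≤ p * (x / y - 1) := mul_le_mul_of_nonneg_left hlog hp.le
    _ ≤ y * (x / y - 1) := mul_le_mul_of_nonneg_right hpy hratio
    _ = x - y := by field_simp

lemma negMulLog_convexComb_le {u v θ : ℝ} (hv : 0 ≤ v) (hvu : v ≤ u) (hθ0 : 0 ≤ θ) (hθ1 : θ ≤ 1) :
    negMulLog ((1 - θ) * u + θ * v) ≤
      θ * (u - v) + (1 - θ) * negMulLog u + θ * negMulLog v := by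
  set w := (1 - θ) * u + θ * v with hw
  have hθv : 0 ≤ θ * v := mul_nonneg hθ0 hv
  have hvw : v ≤ w := by nlinarith
  have hwu : w ≤ u := by nlinarith
  have hu_part : (1 - θ) * u * (log u - log w) ≤ θ * (u - v) := by
    have := mul_log_sub_log_le_sub (mul_nonneg (sub_nonneg.2 hθ1) (hv.trans hvu))
      (by linarith) hwu
    linarith
  have hv_part : θ * v * (log v - log w) ≤ 0 := by
    rcases hv.eq_or_lt with rfl | hv
    · simp
    exact mul_nonpos_of_nonneg_of_nonpos hθv (sub_nonpos.2 (log_le_log hv hvw))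
  simp only [negMulLog]
  linarith [show w * log w = (1 - θ) * u * log w + θ * v * log w by rw [hw]; ring]

theorem Vstar_bellman_inequality_general (a b θ : ℝ)
    (hab : a ≤ b) (hb : b ≤ 1) (hθ0 : 0 ≤ θ) (hθ1 : θ ≤ 1) :
    Vstar (a + (b - a) * θ) ≤ (b - a) * θ + (1 - θ) * Vstar a + θ * Vstar b := by
  have key := negMulLog_convexComb_le (u := 1 - a) (v := 1 - b) (sub_nonneg.2 hb)
    (by linarith) hθ0 hθ1
  rw [show (1 - θ) * (1 - a) + θ * (1 - b) = 1 - (a + (b - a) * θ) by ring] at key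
  simp only [Vstar_eq_negMulLog]
  linarith

/-- Bellman-type inequality for the optimal betting volume: deviating from the
optimal scheme by one arbitrary fair binary gamble cannot beat `V*`. -/
theorem Vstar_bellman_inequality (a b θ : ℝ)
    (ha : 0 ≤ a) (hab : a ≤ b) (hb : b ≤ 1) (hθ0 : 0 ≤ θ) (hθ1 : θ ≤ 1) :
    Vstar (a + (b - a) * θ) ≤ (b - a) * θ + (1 - θ) * Vstar a + θ * Vstar b :=
  Vstar_bellman_inequality_general a b θ hab hb hθ0 hθ1
end
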